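/- Let S be the convex hull of points A_1, ..., A_m in ℝ^{d+1} and let K ⊆ ℝ^{d+1} be a closed convex cone containing the origin. Then the closure of the convex hull of S ∪ (A_1 + K) equals the Minkowski sum S + K. -/

import Mathlib

open scoped Pointwise

/-!
`S + K` is closed (compact plus closed) and convex, and it contains `S ∪ ({a} + K)` because
`0 ∈ K` and `a ∈ S`; so it contains the closure of the convex hull. Conversely, for `0 < t < 1`
the point `(1 - t) • s + t • (a + t⁻¹ • k) = (1 - t) • s + t • a + k` is a convex combination of
`s ∈ S` and `a + t⁻¹ • k ∈ {a} + K`, and it tends to `s + k` as `t → 0⁺`.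
-/

open Set Filter Topology

section

variable {E : Type*} [AddCommGroup E] [Module ℝ E]

theorem convexHull_union_singleton_add_subset {S K : Set E} {a : E} (hS : Convex ℝ S)
    (hK : Convex ℝ K) (hK0 : (0 : E) ∈ K) (ha : a ∈ S) :
    convexHull ℝ (S ∪ ({a} + K)) ⊆ S + K :=
  convexHull_min
    (union_subset (subset_add_left S hK0) (add_subset_add_right (singleton_subset_iff.2 ha)))
    (hS.add hK)

theorem add_mem_closure_convexHull_union_singleton_add [TopologicalSpace E]
    [IsTopologicalAddGroup E] [ContinuousSMul ℝ E] {S K : Set E} {a s k : E}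
    (hK : ∀ x ∈ K, ∀ t : ℝ, 0 < t → t • x ∈ K) (hs : s ∈ S) (hk : k ∈ K) :
    s + k ∈ closure (convexHull ℝ (S ∪ ({a} + K))) := by
  set f : ℝ → E := fun t => (1 - t) • s + t • a + k
  have hlim : Tendsto f (𝓝[>] 0) (𝓝 (s + k)) := by
    have hcont : Continuous f := by fun_prop
    simpa [f] using (hcont.tendsto 0).mono_left nhdsWithin_le_nhds
  refine mem_closure_of_tendsto hlim ?_
  filter_upwards [Ioo_mem_nhdsGT zero_lt_one] with t ⟨ht0, ht1⟩
  have hfar : a + t⁻¹ • k ∈ {a} + K := add_mem_add rfl (hK k hk _ (inv_pos.2 ht0))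
  have hcomb := convex_convexHull ℝ (S ∪ ({a} + K)) (subset_convexHull ℝ _ (Or.inl hs))
    (subset_convexHull ℝ _ (Or.inr hfar)) (sub_nonneg.2 ht1.le) ht0.le (sub_add_cancel 1 t)
  convert hcomb using 1
  rw [smul_add, smul_smul, mul_inv_cancel₀ ht0.ne', one_smul]
  exact add_assoc _ _ _

theorem closure_convexHull_union_singleton_add_eq [TopologicalSpace E]
    [IsTopologicalAddGroup E] [ContinuousSMul ℝ E] {S K : Set E} {a : E}
    (hScomp : IsCompact S) (hSconv : Convex ℝ S) (ha : a ∈ S) (hKclosed : IsClosed K)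
    (hKconv : Convex ℝ K) (hK0 : (0 : E) ∈ K) (hKcone : ∀ x ∈ K, ∀ t : ℝ, 0 < t → t • x ∈ K) :
    closure (convexHull ℝ (S ∪ ({a} + K))) = S + K := by
  refine subset_antisymm ?_ ?_
  · exact closure_minimal (convexHull_union_singleton_add_subset hSconv hKconv hK0 ha)
      (hKclosed.add_left_of_isCompact hScomp)
  · rintro _ ⟨s, hs, k, hk, rfl⟩
    exact add_mem_closure_convexHull_union_singleton_add hKcone hs hk

end

theorem closure_convexHull_union_cone
    {d m : ℕ} [NeZero m] (A : Fin m → EuclideanSpace ℝ (Fin (d + 1)))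
    (K : Set (EuclideanSpace ℝ (Fin (d + 1))))
    (hKclosed : IsClosed K) (hKconv : Convex ℝ K) (hK0 : (0 : EuclideanSpace ℝ (Fin (d + 1))) ∈ K)
    (hKcone : ∀ x ∈ K, ∀ lam : ℝ, 0 < lam → lam • x ∈ K)
    (S : Set (EuclideanSpace ℝ (Fin (d + 1))))
    (hS : S = convexHull ℝ (Set.range A)) :
    closure (convexHull ℝ (S ∪ ({A 0} + K))) = S + K := by
  subst hS
  exact closure_convexHull_union_singleton_add_eq
    ((finite_range A).isCompact_convexHull (𝕜 := ℝ)) (convex_convexHull ℝ _) (subset_convexHull ℝ _ (mem_range_self 0)) hKclosed hKconv hK0 hKcone
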